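/- If a word w over {O,U} of even length satisfies Φ(w) = 0 and contains at least two O's and at least two U's, then w can be transformed by a sequence of reductions (each deleting two adjacent equal letters) into a word of length 4, and moreover one can choose disjoint occurrences of 'OU' and 'UO' in w (as a cyclic word) whose letters all survive such a sequence of reductions. -/

import Mathlib

inductive Letter : Type
  | O : Letter
  | U : Letter
  deriving DecidableEq, BEq, Repr

open Letter

/-- number of O's in a word -/
def countO (w : List Letter) : ℕ := w.count O

/-- number of U's in a word -/
def countU (w : List Letter) : ℕ := w.count U

/-- number of O's in odd 1-based positions (even 0-based index) -/
def NOo (w : List Letter) : ℕ := ((w.zipIdx.map Prod.swap).filter (fun p => p.1 % 2 == 0 && p.2 == O)).length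

/-- number of O's in even 1-based positions -/
def NOe (w : List Letter) : ℕ := ((w.zipIdx.map Prod.swap).filter (fun p => p.1 % 2 == 1 && p.2 == O)).length

/-- number of U's in odd 1-based positions -/
def NUo (w : List Letter) : ℕ := ((w.zipIdx.map Prod.swap).filter (fun p => p.1 % 2 == 0 && p.2 == U)).length

/-- number of U's in even 1-based positions -/
def NUe (w : List Letter) : ℕ := ((w.zipIdx.map Prod.swap).filter (fun p => p.1 % 2 == 1 && p.2 == U)).length

/-- twice the OU signed quantity: N^O_e + N^U_o − N^O_o − N^U_e -/
def twoPhi (w : List Letter) : ℤ := (NOe w : ℤ) + NUo w - NOo w - NUe w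

/-- the (signed) OU number Φ of a word of even length -/
def Phi (w : List Letter) : ℤ := twoPhi w / 2

/-- cyclic access to the letters of a word -/
def cget (w : List Letter) (i : ℕ) : Letter := w.getD (i % w.length) O

/-- a cyclic occurrence of the factor `OU` at position `i` -/
def OUat (w : List Letter) (i : ℕ) : Prop := cget w i = O ∧ cget w (i + 1) = U

/-- a cyclic occurrence of the factor `UO` at position `i` -/
def UOat (w : List Letter) (i : ℕ) : Prop := cget w i = U ∧ cget w (i + 1) = O

instance (w : List Letter) (i : ℕ) : Decidable (OUat w i) := by unfold OUat; infer_instance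
instance (w : List Letter) (i : ℕ) : Decidable (UOat w i) := by unfold UOat; infer_instance

/-- the cyclic factors at positions `i` and `j` (each occupying `{i, i+1 mod n}`) are disjoint -/
def PairDisjoint (n i j : ℕ) : Prop :=
  i ≠ j ∧ i ≠ (j + 1) % n ∧ (i + 1) % n ≠ j ∧ (i + 1) % n ≠ (j + 1) % n

/-- a word is alternating in the cyclic sense -/
def CyclicAlternating (w : List Letter) : Prop :=
  w.Chain' (· ≠ ·) ∧ ∀ a ∈ w.head?, ∀ b ∈ w.getLast?, a ≠ b

/-- one reduction: delete two adjacent equal letters -/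
def Reduces (w w' : List Letter) : Prop :=
  ∃ a b x, w = a ++ x :: x :: b ∧ w' = a ++ b

/-- `ReducesN k w w'` : `w'` is obtained from `w` by exactly `k` reductions -/
inductive ReducesN : ℕ → List Letter → List Letter → Prop
  | refl (w : List Letter) : ReducesN 0 w w
  | step {k : ℕ} {w w' w'' : List Letter} :
      Reduces w w' → ReducesN k w' w'' → ReducesN (k + 1) w w''

/-! The signed count `twoPhi` satisfies `twoPhi (x :: w) = sign x - twoPhi w`, so
deleting an adjacent pair `xx` does not change it, and on an alternating word it is `± |w|`: a
nonempty word with `twoPhi w = 0` has an adjacent equal pair. Modulo 4 it is `2 #O + |w| mod 2`,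
so for even length both letter counts are even. A linear word without a pair `xx` has at most one
more `x` than `y`; hence, while the length is at least 6, some pair `xx` with `#x ≥ 4` can be
deleted, and both counts stay at least 2 down to length 4.

For the disjoint factors, rotate a pair `xx` to the front and then past the run of `x`s it starts:
the word becomes `x y b x e` with another `y` in `b`, and the factor `y x` at the last `y` of `b x`
is disjoint from the leading `x y`. -/

-- The filters in `NOo`, ... use the derived `BEq`, which `simp` can only relate to `=` through this.
instance : LawfulBEq Letter where
  eq_of_beq {a b} h := by cases a <;> cases b <;> first | rfl | exact absurd h (by decide)
  rfl {a} := by cases a <;> rfl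

namespace Letter

def sign : Letter → ℤ
  | O => -1
  | U => 1

theorem sign_of_ne {x y : Letter} (h : x ≠ y) : y.sign = -x.sign := by
  cases x <;> cases y <;> simp_all [sign]

theorem eq_of_ne_of_ne {x y z : Letter} (hxy : x ≠ y) (hzx : z ≠ x) : z = y := by
  cases x <;> cases y <;> cases z <;> simp_all

end Letter

theorem countO_add_countU (w : List Letter) : countO w + countU w = w.length := by
  induction w with
  | nil => rfl
  | cons x w ih =>
    simp only [countO, countU, List.count_cons, List.length_cons] at ih ⊢
    cases x <;> simp only [BEq.rfl, beq_iff_eq, reduceCtorEq, ↓reduceIte] <;> omega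

def parityCount (r : ℕ) (c : Letter) (w : List Letter) : ℕ :=
  ((w.zipIdx.map Prod.swap).filter (fun p => p.1 % 2 == r && p.2 == c)).length

theorem parityCount_cons {r : ℕ} (hr : r < 2) (c x : Letter) (w : List Letter) :
    parityCount r c (x :: w) = (if r = 0 ∧ x = c then 1 else 0) + parityCount (1 - r) c w := by
  unfold parityCount
  rw [List.zipIdx_cons, List.zipIdx_succ]
  simp only [List.map_cons, List.map_map, List.filter_cons, List.filter_map]
  rw [List.filter_congr (q := (fun p => p.1 % 2 == 1 - r && p.2 == c) ∘ Prod.swap)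
    (fun p _ => by simp only [Function.comp, Prod.swap]; congr 1; simp only [beq_eq_beq]; omega)]
  interval_cases r <;> cases x <;> cases c <;> simp [Nat.add_comm]

@[simp]
theorem twoPhi_nil : twoPhi [] = 0 := rfl

theorem twoPhi_cons (x : Letter) (w : List Letter) : twoPhi (x :: w) = x.sign - twoPhi w := by
  simp only [twoPhi, NOe, NOo, NUe, NUo]
  simp only [← parityCount.eq_def, parityCount_cons (r := 0) (by norm_num),
    parityCount_cons (r := 1) (by norm_num)]
  cases x <;> simp only [Letter.sign, and_true, and_false, reduceCtorEq, one_ne_zero,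
    ↓reduceIte, tsub_self, tsub_zero, Nat.cast_add, Nat.cast_one, zero_add] <;> ring

theorem twoPhi_append (a b : List Letter) :
    twoPhi (a ++ b) = twoPhi a + (-1) ^ a.length * twoPhi b := by
  induction a with
  | nil => simp
  | cons x a ih =>
    rw [List.cons_append, twoPhi_cons, twoPhi_cons, ih, List.length_cons, pow_succ]
    ring

theorem twoPhi_emod_four (w : List Letter) :
    (twoPhi w - 2 * countO w - (w.length % 2 : ℕ)) % 4 = 0 := by
  induction w with
  | nil => rfl
  | cons x w ih =>
    rw [twoPhi_cons]
    simp only [countO, List.count_cons, List.length_cons] at ih ⊢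
    cases x <;> simp only [Letter.sign, BEq.rfl, beq_iff_eq, reduceCtorEq, ↓reduceIte] <;> omega

theorem twoPhi_emod_two {w : List Letter} (hl : Even w.length) : twoPhi w % 2 = 0 := by
  have := twoPhi_emod_four w
  rw [Nat.even_iff.mp hl] at this
  omega

theorem countO_emod_two {w : List Letter} (hl : Even w.length) (h : twoPhi w = 0) :
    countO w % 2 = 0 := by
  have := twoPhi_emod_four w
  rw [Nat.even_iff.mp hl, h] at this
  omega

theorem twoPhi_of_isChain {x : Letter} {w : List Letter} (h : (x :: w).IsChain (· ≠ ·)) :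
    twoPhi (x :: w) = x.sign * (w.length + 1) := by
  induction w generalizing x with
  | nil => simp [twoPhi_cons]
  | cons y w ih =>
    obtain ⟨hxy, h⟩ := List.isChain_cons_cons.mp h
    rw [twoPhi_cons, ih h, List.length_cons, Letter.sign_of_ne hxy]
    push_cast
    ring

namespace Reduces

variable {w w' : List Letter}

theorem twoPhi_eq (h : Reduces w w') : twoPhi w' = twoPhi w := by
  obtain ⟨a, b, x, rfl, rfl⟩ := h
  rw [twoPhi_append, twoPhi_append, twoPhi_cons, twoPhi_cons]
  ring

theorem length_eq (h : Reduces w w') : w.length = w'.length + 2 := by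
  obtain ⟨a, b, x, rfl, rfl⟩ := h
  simp only [List.length_append, List.length_cons]
  omega

end Reduces

theorem exists_eq_append_cons_cons_of_twoPhi_eq_zero {w : List Letter} (hw : w ≠ [])
    (h : twoPhi w = 0) : ∃ a x b, w = a ++ x :: x :: b := by
  by_contra! hno
  obtain ⟨x, w, rfl⟩ := List.exists_cons_of_ne_nil hw
  have hchain : (x :: w).IsChain (· ≠ ·) :=
    List.isChain_iff_forall_rel_of_append_cons_cons.mpr fun y z a b hw hyz => hno a y b (hyz ▸ hw)
  rw [twoPhi_of_isChain hchain] at h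
  cases x <;> simp only [Letter.sign] at h <;> omega

theorem count_le_of_forall_ne_append_cons_cons {x y : Letter} (hxy : x ≠ y) :
    ∀ {w : List Letter}, (∀ a b, w ≠ a ++ x :: x :: b) →
      w.count x ≤ w.count y + if w.head? = some x then 1 else 0
  | [], _ => by simp
  | z :: w, hno => by
    have ih := count_le_of_forall_ne_append_cons_cons hxy (w := w)
      fun a b hw => hno (z :: a) b (by rw [hw, List.cons_append])
    by_cases hzx : z = x
    · subst hzx
      have hw : w.head? ≠ some z := fun hw => by
        obtain ⟨w, rfl⟩ : ∃ t, w = z :: t := by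
          cases w <;> simp_all
        exact hno [] w rfl
      simp only [hw, ↓reduceIte, List.count_cons_self, List.count_cons_of_ne hxy,
        List.head?_cons] at ih ⊢
      omega
    · obtain rfl := Letter.eq_of_ne_of_ne hxy hzx
      simp only [List.count_cons_of_ne (Ne.symm hxy), List.count_cons_self, List.head?_cons,
        Option.some.injEq, hxy.symm, ↓reduceIte] at ih ⊢
      split_ifs at ih <;> omega

theorem exists_eq_append_cons_cons_of_count_add_two_le {x y : Letter} (hxy : x ≠ y)
    {w : List Letter} (h : w.count y + 2 ≤ w.count x) : ∃ a b, w = a ++ x :: x :: b := by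
  by_contra! hno
  have := count_le_of_forall_ne_append_cons_cons hxy hno
  split_ifs at this <;> omega

theorem exists_reduces_of_six_le_length {w : List Letter} (hl : Even w.length)
    (h6 : 6 ≤ w.length) (h : twoPhi w = 0) (hO : 2 ≤ countO w) (hU : 2 ≤ countU w) :
    ∃ w', Reduces w w' ∧ 2 ≤ countO w' ∧ 2 ≤ countU w' := by
  have hsum := countO_add_countU w
  have hOeven := countO_emod_two hl h
  have hleven := Nat.even_iff.mp hl
  simp only [countO, countU] at *
  obtain ⟨a, x, b, rfl, hx⟩ : ∃ a x b, w = a ++ x :: x :: b ∧ 4 ≤ w.count x := by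
    by_cases hO2 : w.count O = 2
    · obtain ⟨a, b, hw⟩ := exists_eq_append_cons_cons_of_count_add_two_le
        (x := U) (y := O) (w := w) (by decide) (by omega)
      exact ⟨a, U, b, hw, by omega⟩
    by_cases hU2 : w.count U = 2
    · obtain ⟨a, b, hw⟩ := exists_eq_append_cons_cons_of_count_add_two_le
        (x := O) (y := U) (w := w) (by decide) (by omega)
      exact ⟨a, O, b, hw, by omega⟩
    obtain ⟨a, x, b, hw⟩ := exists_eq_append_cons_cons_of_twoPhi_eq_zero
      (List.ne_nil_of_length_pos (by omega)) h
    exact ⟨a, x, b, hw, by cases x <;> omega⟩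
  refine ⟨a ++ b, ⟨a, b, x, rfl, rfl⟩, ?_, ?_⟩ <;>
    simp only [List.count_append, List.count_cons] at * <;>
    cases x <;> simp only [BEq.rfl, beq_iff_eq, reduceCtorEq, ↓reduceIte] at * <;> omega

theorem exists_reflTransGen_reduces_length_eq_four {w : List Letter} (hl : Even w.length)
    (h : twoPhi w = 0) (hO : 2 ≤ countO w) (hU : 2 ≤ countU w) :
    ∃ w', Relation.ReflTransGen Reduces w w' ∧ w'.length = 4 ∧ twoPhi w' = 0 ∧
      2 ≤ countO w' ∧ 2 ≤ countU w' := by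
  obtain ⟨k, hk⟩ : ∃ k, w.length = 2 * k + 4 := by
    have := countO_add_countU w
    obtain ⟨m, hm⟩ := hl
    exact ⟨m - 2, by omega⟩
  induction k generalizing w with
  | zero => exact ⟨w, .refl, hk, h, hO, hU⟩
  | succ k ih =>
    obtain ⟨w₁, hw₁, hO₁, hU₁⟩ := exists_reduces_of_six_le_length hl (by omega) h hO hU
    have hlen := hw₁.length_eq
    obtain ⟨w', hw', hrest⟩ := ih (by rw [hlen] at hl; simpa [parity_simps] using hl)
      (hw₁.twoPhi_eq.trans h) hO₁ hU₁ (by omega)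
    exact ⟨w', .head hw₁ hw', hrest⟩

theorem cget_rotate (w : List Letter) (s k : ℕ) : cget (w.rotate s) k = cget w (k + s) := by
  rcases Nat.eq_zero_or_pos w.length with hw | hw
  · simp [cget, List.length_eq_zero_iff.mp hw]
  have hk : k % w.length < (w.rotate s).length := by simpa using Nat.mod_lt k hw
  simp only [cget, List.length_rotate]
  rw [List.getD_eq_getElem _ _ hk, List.getD_eq_getElem _ _ (Nat.mod_lt _ hw),
    List.getElem_rotate]
  simp only [Nat.mod_add_mod]

theorem cget_append_cons (a b : List Letter) (x : Letter) : cget (a ++ x :: b) a.length = x := by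
  have h : a.length < (a ++ x :: b).length := by simp
  rw [cget, Nat.mod_eq_of_lt h]
  simp

theorem pairDisjoint_iff {n i j : ℕ} (hi : i < n) (hj : j < n) :
    PairDisjoint n i j ↔ ¬ i ≡ j [MOD n] ∧ ¬ i ≡ j + 1 [MOD n] ∧ ¬ i + 1 ≡ j [MOD n] ∧
      ¬ i + 1 ≡ j + 1 [MOD n] := by
  simp only [PairDisjoint, Nat.ModEq, Nat.mod_eq_of_lt hi, Nat.mod_eq_of_lt hj, ne_eq]

theorem PairDisjoint.add_mod {n i j : ℕ} (hi : i < n) (hj : j < n) (h : PairDisjoint n i j)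
    (s : ℕ) : PairDisjoint n ((i + s) % n) ((j + s) % n) := by
  have hn : 0 < n := by omega
  rw [pairDisjoint_iff hi hj] at h
  rw [pairDisjoint_iff (Nat.mod_lt _ hn) (Nat.mod_lt _ hn)]
  have shift (a b c d : ℕ) (hab : ¬ a + c ≡ b + d [MOD n]) :
      ¬ (a + s) % n + c ≡ (b + s) % n + d [MOD n] := fun h' =>
    hab <| Nat.ModEq.add_right_cancel' s <| by
      rw [add_right_comm a, add_right_comm b]
      exact ((Nat.mod_modEq _ n).add_right c).symm.trans
        (h'.trans ((Nat.mod_modEq _ n).add_right d))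
  exact ⟨by simpa using shift i j 0 0 (by simpa using h.1),
    by simpa using shift i j 0 1 (by simpa using h.2.1),
    by simpa using shift i j 1 0 (by simpa using h.2.2.1), shift i j 1 1 h.2.2.2⟩

def HasDisjointFactors (w : List Letter) (x y : Letter) : Prop :=
  ∃ i j, i < w.length ∧ j < w.length ∧ PairDisjoint w.length i j ∧
    (cget w i = x ∧ cget w (i + 1) = y) ∧ (cget w j = y ∧ cget w (j + 1) = x)

namespace HasDisjointFactors

variable {w : List Letter} {x y : Letter}

theorem symm (h : HasDisjointFactors w x y) : HasDisjointFactors w y x := by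
  obtain ⟨i, j, hi, hj, hd, hxy, hyx⟩ := h
  exact ⟨j, i, hj, hi, ⟨hd.1.symm, hd.2.2.1.symm, hd.2.1.symm, hd.2.2.2.symm⟩, hyx, hxy⟩

theorem of_rotate {s : ℕ} (h : HasDisjointFactors (w.rotate s) x y) : HasDisjointFactors w x y := by
  obtain ⟨i, j, hi, hj, hd, ⟨hi₀, hi₁⟩, ⟨hj₀, hj₁⟩⟩ := h
  rw [List.length_rotate] at hi hj hd
  have hn : 0 < w.length := by omega
  have hmod (k c : ℕ) : cget w ((k + s) % w.length + c) = cget (w.rotate s) (k + c) := by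
    rw [cget_rotate, cget, cget, Nat.mod_add_mod, add_right_comm]
  refine ⟨(i + s) % w.length, (j + s) % w.length, Nat.mod_lt _ hn, Nat.mod_lt _ hn,
    hd.add_mod hi hj s, ⟨(hmod i 0).trans hi₀, ?_⟩, ⟨(hmod j 0).trans hj₀, ?_⟩⟩
  · rw [hmod, hi₁]
  · rw [hmod, hj₁]

end HasDisjointFactors

theorem exists_append_singleton_eq_append_cons_cons {x y : Letter} (hxy : x ≠ y)
    {b : List Letter} (hb : y ∈ b) : ∃ c d, b ++ [x] = c ++ y :: x :: d := by
  induction b using List.reverseRecOn with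
  | nil => simp at hb
  | append_singleton b z ih =>
    by_cases hz : z = y
    · exact ⟨b, [], by simp [hz]⟩
    · obtain ⟨c, d, h⟩ := ih (by simpa [Ne.symm hz] using hb)
      refine ⟨c, d ++ [x], ?_⟩
      rw [Letter.eq_of_ne_of_ne (Ne.symm hxy) hz, h]
      simp

theorem hasDisjointFactors_cons_cons_append {x y : Letter} (hxy : x ≠ y) {b : List Letter}
    (hb : y ∈ b) (e : List Letter) : HasDisjointFactors (x :: y :: (b ++ x :: e)) x y := by
  obtain ⟨c, d, hcd⟩ := exists_append_singleton_eq_append_cons_cons hxy hb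
  have hw : b ++ x :: e = c ++ y :: x :: (d ++ e) := by
    rw [← List.singleton_append, ← List.append_assoc, hcd]
    simp
  rw [hw]
  refine ⟨0, c.length + 2, by simp, by simp, ?_, ⟨?_, ?_⟩, ⟨?_, ?_⟩⟩
  · have hn : (x :: y :: (c ++ y :: x :: (d ++ e))).length =
        c.length + d.length + e.length + 4 := by
      simp only [List.length_cons, List.length_append]
      omega
    rw [hn, PairDisjoint, Nat.mod_eq_of_lt (by omega), Nat.mod_eq_of_lt (by omega)]
    omega
  · exact cget_append_cons [] _ x
  · exact cget_append_cons [x] _ y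
  · simpa using cget_append_cons (x :: y :: c) (x :: (d ++ e)) y
  · simpa using cget_append_cons (x :: y :: c ++ [y]) (d ++ e) x

theorem exists_cons_eq_replicate_append_cons {x y : Letter} (hxy : x ≠ y) :
    ∀ {s : List Letter}, 2 ≤ s.count y →
      ∃ k b, x :: s = List.replicate (k + 1) x ++ y :: b ∧ y ∈ b
  | [], hs => by simp at hs
  | z :: s, hs => by
    by_cases hz : z = y
    · subst hz
      exact ⟨0, s, rfl, List.count_pos_iff.mp (by rw [List.count_cons_self] at hs; omega)⟩
    · obtain ⟨k, b, hb, hyb⟩ := exists_cons_eq_replicate_append_cons hxy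
        (by rwa [List.count_cons_of_ne hz] at hs)
      refine ⟨k + 1, b, ?_, hyb⟩
      rw [Letter.eq_of_ne_of_ne hxy.symm hz, hb]
      rfl

theorem hasDisjointFactors_of_eq_append_cons_cons {x y : Letter} (hxy : x ≠ y)
    {w a b : List Letter} (hw : w = a ++ x :: x :: b) (hy : 2 ≤ w.count y) :
    HasDisjointFactors w x y := by
  obtain ⟨k, c, hc, hyc⟩ := exists_cons_eq_replicate_append_cons hxy (s := b ++ a)
    (by simp only [hw, List.count_append, List.count_cons_of_ne hxy] at hy ⊢; omega)
  have hrot : (w.rotate (a ++ [x]).length).rotate (List.replicate k x).length =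
      x :: y :: (c ++ x :: List.replicate k x) := by
    rw [hw, show a ++ x :: x :: b = (a ++ [x]) ++ x :: b by simp, List.rotate_append_length_eq,
      show x :: b ++ (a ++ [x]) = x :: (b ++ a) ++ [x] by simp, hc,
      show List.replicate (k + 1) x ++ y :: c ++ [x] =
        List.replicate k x ++ x :: y :: (c ++ [x]) by simp [List.replicate_succ'],
      List.rotate_append_length_eq]
    simp
  have := hasDisjointFactors_cons_cons_append hxy hyc (List.replicate k x)
  rw [← hrot] at this
  exact this.of_rotate.of_rotate

theorem hasDisjointFactors_of_twoPhi_eq_zero {w : List Letter} (h : twoPhi w = 0)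
    (hO : 2 ≤ countO w) (hU : 2 ≤ countU w) : HasDisjointFactors w O U := by
  have hw : w ≠ [] :=
    List.ne_nil_of_mem (List.count_pos_iff.mp (show 0 < w.count O by unfold countO at hO; omega))
  obtain ⟨a, x, b, hab⟩ := exists_eq_append_cons_cons_of_twoPhi_eq_zero hw h
  cases x
  · exact hasDisjointFactors_of_eq_append_cons_cons (by decide) hab hU
  · exact (hasDisjointFactors_of_eq_append_cons_cons (by decide) hab hO).symm

theorem stmt11 (w : List Letter) (h : Even w.length) (hPhi : Phi w = 0)
    (hO : 2 ≤ countO w) (hU : 2 ≤ countU w) :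
    ∃ w', Relation.ReflTransGen Reduces w w' ∧ w'.length = 4 ∧
      (∃ i j, i < w.length ∧ j < w.length ∧ PairDisjoint w.length i j ∧
        OUat w i ∧ UOat w j) ∧
      (∃ i j, i < 4 ∧ j < 4 ∧ PairDisjoint 4 i j ∧ OUat w' i ∧ UOat w' j) := by
  have h₀ : twoPhi w = 0 := by
    have := twoPhi_emod_two h
    rw [Phi] at hPhi
    omega
  obtain ⟨w', hred, hlen, h₀', hO', hU'⟩ := exists_reflTransGen_reduces_length_eq_four h h₀ hO hU
  exact ⟨w', hred, hlen, hasDisjointFactors_of_twoPhi_eq_zero h₀ hO hU,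
    hlen ▸ hasDisjointFactors_of_twoPhi_eq_zero h₀' hO' hU'⟩
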